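/- Let p, q : [0,∞) → ℝ be right analytic functions of exponential order with p(0) = 1, and let n > m ≥ 1 be coprime integers with x₀ = (m/n)^{1/(n−m)}. Suppose p(t) > x₀ for all t > 0 and q(t) ≥ x₀ for all t > 0, and suppose that inf{x > 0 : p(x) ≠ 0} = 0. If ∫₀^∞ e^{-λx} p(x)^n dx / ∫₀^∞ e^{-λx} p(x)^m dx = ∫₀^∞ e^{-λx} q(x)^n dx / ∫₀^∞ e^{-λx} q(x)^m dx for all sufficiently large λ, then p(x) = q(x) for all x ≥ 0. -/

import Mathlib

open MeasureTheory Real Set Filter Asymptotics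

noncomputable def lap (p : ℝ → ℝ) (l : ℝ) : ℝ :=
  ∫ x in Set.Ioi (0:ℝ), Real.exp (-l * x) * p x

def ExpOrder (p : ℝ → ℝ) : Prop :=
  ∃ c > (0:ℝ), ∃ C > (0:ℝ), ∀ x ≥ (0:ℝ), |p x| ≤ C * Real.exp (c * x)

def RightAnalytic (p : ℝ → ℝ) : Prop :=
  ∀ x ≥ (0:ℝ), ∃ a : ℕ → ℝ, ∃ ε > (0:ℝ), ∀ t ∈ Set.Ico x (x + ε),
    HasSum (fun i => a i * (t - x) ^ i) (p t)

/-!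
Suppose `p ≠ q` somewhere on `[0, ∞)` and let `s` be the infimum of the points where they differ.
Right analyticity at `s` gives `j` and `d ≠ 0` with `(p - q) (s + u) ~ d u ^ j`, hence
`(p ^ k - q ^ k) (s + u) ~ d S_k u ^ j` with `S_k = ∑_{i < k} p(s) ^ i q(s) ^ (k - 1 - i)`.
Watson's lemma turns these expansions into asymptotics of Laplace transforms as `λ → ∞`:
`λ L[p ^ k] → 1`, `λ L[q ^ k] → q(0) ^ k` and `e^{λ s} λ^{j+1} (L[p ^ k] - L[q ^ k]) → d S_k j!`.
Cross-multiplying the ratio identity gives first `q(0) = 1` and then `S_n = S_m`. But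
`x ↦ x ^ n - x ^ m` is strictly increasing beyond its critical point `x₀`, and `p(s) > x₀`,
`q(s) ≥ x₀`, which forces `S_n > S_m`.
-/

open scoped Topology Nat

lemma tendsto_nhdsGT_of_hasSum_pow {c : ℕ → ℝ} {f : ℝ → ℝ} {ε : ℝ} (hε : 0 < ε)
    (h : ∀ u ∈ Ioo 0 ε, HasSum (fun i => c i * u ^ i) (f u)) :
    Tendsto f (𝓝[>] 0) (𝓝 (c 0)) := by
  have hρ : ε / 2 ∈ Ioo 0 ε := ⟨by positivity, by linarith⟩
  have hlim := tendsto_tsum_of_dominated_convergence (𝓕 := 𝓝[>] (0:ℝ))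
    (f := fun u i => c i * u ^ i) (g := fun i => c i * 0 ^ i) (h _ hρ).summable.abs
    (fun i => ((continuous_const.mul (continuous_pow i)).tendsto 0).mono_left nhdsWithin_le_nhds)
    (by
      filter_upwards [Ioo_mem_nhdsGT hρ.1] with u hu i
      rw [Real.norm_eq_abs, abs_mul, abs_mul, abs_pow, abs_pow, abs_of_pos hu.1, abs_of_pos hρ.1]
      gcongr
      exacts [hu.1.le, hu.2.le])
  rw [tsum_eq_single 0 fun i hi => by simp [hi]] at hlim
  simp only [pow_zero, mul_one] at hlim
  refine hlim.congr' ?_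
  filter_upwards [Ioo_mem_nhdsGT hε] with u hu using (h u hu).tsum_eq

lemma tendsto_div_pow_nhdsGT_of_hasSum_pow {c : ℕ → ℝ} {f : ℝ → ℝ} {ε : ℝ} (hε : 0 < ε)
    (h : ∀ u ∈ Ioo 0 ε, HasSum (fun i => c i * u ^ i) (f u)) {j : ℕ}
    (hj : ∀ i < j, c i = 0) :
    Tendsto (fun u => f u / u ^ j) (𝓝[>] 0) (𝓝 (c j)) := by
  rw [show c j = c (0 + j) by rw [zero_add]]
  refine tendsto_nhdsGT_of_hasSum_pow (c := fun i => c (i + j)) hε fun u hu => ?_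
  have hshift := (hasSum_nat_add_iff' j).2 (h u hu)
  rw [Finset.sum_eq_zero fun i hi => by rw [hj i (Finset.mem_range.1 hi), zero_mul],
    sub_zero] at hshift
  simpa only [pow_add, mul_div_assoc, mul_div_cancel_right₀ _ (pow_ne_zero j hu.1.ne')] using
    hshift.div_const (u ^ j)

lemma measurable_of_continuousWithinAt_Ici {β : Type*} [TopologicalSpace β]
    [TopologicalSpace.PseudoMetrizableSpace β] [MeasurableSpace β] [BorelSpace β] {f : ℝ → β}
    (hf : ∀ x, ContinuousWithinAt f (Ici x) x) : Measurable f := by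
  -- `f` is the pointwise limit of its values at the dyadic points just right of `x`
  set dy : ℕ → ℝ → ℝ := fun k x => (⌊x * 2 ^ k⌋ + 1) / 2 ^ k
  have hdy : ∀ k x, x < dy k x ∧ dy k x ≤ x + (2 ^ k)⁻¹ := fun k x => by
    have h2 : (0 : ℝ) < 2 ^ k := by positivity
    constructor
    · rw [lt_div_iff₀ h2]; exact Int.lt_floor_add_one _
    · rw [div_le_iff₀ h2, add_mul, inv_mul_cancel₀ h2.ne']
      linarith [Int.floor_le (x * 2 ^ k)]
  refine measurable_of_tendsto_metrizable (f := fun k => f ∘ dy k) (fun k => ?_)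
    (tendsto_pi_nhds.2 fun x => ?_)
  · exact (measurable_of_countable fun z : ℤ => f ((z + 1) / 2 ^ k)).comp
      (Int.measurable_floor.comp (measurable_id.mul_const _))
  · have hlim : Tendsto (fun k : ℕ => x + ((2 : ℝ) ^ k)⁻¹) atTop (𝓝 x) := by
      have h2 : Tendsto (fun k : ℕ => ((2 : ℝ) ^ k)⁻¹) atTop (𝓝 0) :=
        tendsto_inv_atTop_zero.comp (tendsto_pow_atTop_atTop_of_one_lt one_lt_two)
      simpa using (tendsto_const_nhds (x := x)).add h2
    refine (hf x).tendsto.comp (tendsto_nhdsWithin_iff.2 ⟨?_, .of_forall fun k => (hdy k x).1.le⟩)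
    exact tendsto_of_tendsto_of_tendsto_of_le_of_le tendsto_const_nhds hlim
      (fun k => (hdy k x).1.le) fun k => (hdy k x).2

namespace RightAnalytic

variable {p q : ℝ → ℝ}

lemma exists_hasSum_add (hp : RightAnalytic p) {x : ℝ} (hx : 0 ≤ x) :
    ∃ a : ℕ → ℝ, ∃ ε > 0, ∀ u ∈ Ico 0 ε, HasSum (fun i => a i * u ^ i) (p (x + u)) := by
  obtain ⟨a, ε, hε, h⟩ := hp x hx
  exact ⟨a, ε, hε, fun u hu => by
    simpa using h (x + u) ⟨by linarith [hu.1], by linarith [hu.2]⟩⟩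

lemma sub (hp : RightAnalytic p) (hq : RightAnalytic q) :
    RightAnalytic (fun x => p x - q x) := by
  intro x hx
  obtain ⟨a, ε, hε, ha⟩ := hp x hx
  obtain ⟨b, δ, hδ, hb⟩ := hq x hx
  refine ⟨fun i => a i - b i, min ε δ, lt_min hε hδ, fun t ht => ?_⟩
  simpa only [sub_mul] using
    (ha t ⟨ht.1, ht.2.trans_le (by gcongr; exact min_le_left _ _)⟩).sub
      (hb t ⟨ht.1, ht.2.trans_le (by gcongr; exact min_le_right _ _)⟩)

lemma comp_max_zero (hp : RightAnalytic p) : RightAnalytic (fun x => p (max x 0)) := by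
  intro x hx
  obtain ⟨a, ε, hε, h⟩ := hp x hx
  exact ⟨a, ε, hε, fun t ht => by
    simpa only [max_eq_left (hx.trans ht.1)] using h t ht⟩

lemma tendsto_add_nhdsGT (hp : RightAnalytic p) {x : ℝ} (hx : 0 ≤ x) :
    Tendsto (fun u => p (x + u)) (𝓝[>] 0) (𝓝 (p x)) := by
  obtain ⟨a, ε, hε, h⟩ := hp.exists_hasSum_add hx
  have hval : p x = a 0 := by
    simpa using (h 0 ⟨le_rfl, hε⟩).unique (hasSum_single 0 fun i hi => by simp [hi])
  exact hval ▸ tendsto_nhdsGT_of_hasSum_pow hε fun u hu => h u (Ioo_subset_Ico_self hu)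

lemma continuousWithinAt_Ici (hp : RightAnalytic p) {x : ℝ} (hx : 0 ≤ x) :
    ContinuousWithinAt p (Ici x) x := by
  rw [← continuousWithinAt_Ioi_iff_Ici, ContinuousWithinAt]
  have := (tendsto_map'_iff (f := p) (g := (x + ·))).2 (hp.tendsto_add_nhdsGT hx)
  rwa [map_add_left_nhdsGT, add_zero] at this

lemma measurable_comp_max_zero (hp : RightAnalytic p) : Measurable (fun x => p (max x 0)) :=
  measurable_of_continuousWithinAt_Ici fun x =>
    (hp.continuousWithinAt_Ici (le_max_right x 0)).comp (f := fun y => max y 0) (s := Ici x)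
      (continuous_id.max continuous_const).continuousWithinAt
      fun _ (hy : x ≤ _) => max_le_max hy le_rfl

lemma exists_tendsto_div_pow_of_ne_zero (hp : RightAnalytic p) (hne : ∃ x ≥ 0, p x ≠ 0) :
    ∃ s ≥ 0, (∀ x ∈ Ico 0 s, p x = 0) ∧
      ∃ j : ℕ, ∃ d ≠ 0, Tendsto (fun u => p (s + u) / u ^ j) (𝓝[>] 0) (𝓝 d) := by
  classical
  set S := {x | 0 ≤ x ∧ p x ≠ 0}
  have hS : S.Nonempty := hne
  have hbdd : BddBelow S := ⟨0, fun x hx => hx.1⟩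
  have hs : 0 ≤ sInf S := le_csInf hS fun x hx => hx.1
  obtain ⟨a, ε, hε, h⟩ := hp.exists_hasSum_add hs
  have ha : ∃ i, a i ≠ 0 := by
    by_contra! ha
    have : sInf S + ε ≤ sInf S := le_csInf hS fun x hx => by
      by_contra! hlt
      have hsum := h (x - sInf S) ⟨by linarith [csInf_le hbdd hx], by linarith⟩
      simp only [ha, zero_mul, add_sub_cancel] at hsum
      exact hx.2 (hsum.unique hasSum_zero)
    linarith
  refine ⟨sInf S, hs, fun x hx => ?_, Nat.find ha, a (Nat.find ha), Nat.find_spec ha, ?_⟩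
  · by_contra h
    exact (csInf_le hbdd ⟨hx.1, h⟩).not_gt hx.2
  · exact tendsto_div_pow_nhdsGT_of_hasSum_pow hε (fun u hu => h u (Ioo_subset_Ico_self hu))
      fun i hi => not_not.1 (Nat.find_min ha hi)

end RightAnalytic

namespace ExpOrder

variable {f g : ℝ → ℝ}

lemma of_le {C c : ℝ} (h : ∀ x ≥ 0, |f x| ≤ C * exp (c * x)) : ExpOrder f :=
  ⟨max c 1, by positivity, max C 1, by positivity, fun x hx => (h x hx).trans <| by
    gcongr
    exacts [le_max_left _ _, le_max_left _ _]⟩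

lemma pow (hf : ExpOrder f) (k : ℕ) : ExpOrder (fun x => f x ^ k) := by
  obtain ⟨c, -, C, -, h⟩ := hf
  refine of_le (C := C ^ k) (c := k * c) fun x hx => ?_
  rw [abs_pow, mul_assoc, exp_nat_mul, ← mul_pow]
  exact pow_le_pow_left₀ (abs_nonneg _) (h x hx) k

lemma sub (hf : ExpOrder f) (hg : ExpOrder g) : ExpOrder (fun x => f x - g x) := by
  obtain ⟨c, hc, C, hC, hfC⟩ := hf
  obtain ⟨d, hd, D, hD, hgD⟩ := hg
  refine of_le (C := C + D) (c := c + d) fun x hx => ?_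
  have hc' : exp (c * x) ≤ exp ((c + d) * x) := exp_le_exp.2 (by nlinarith)
  have hd' : exp (d * x) ≤ exp ((c + d) * x) := exp_le_exp.2 (by nlinarith)
  calc |f x - g x| ≤ |f x| + |g x| := abs_sub _ _
    _ ≤ C * exp (c * x) + D * exp (d * x) := add_le_add (hfC x hx) (hgD x hx)
    _ ≤ (C + D) * exp ((c + d) * x) := by nlinarith

lemma comp_add (hf : ExpOrder f) {s : ℝ} (hs : 0 ≤ s) : ExpOrder (fun u => f (s + u)) := by
  obtain ⟨c, -, C, -, h⟩ := hf
  refine of_le (C := C * exp (c * s)) (c := c) fun u hu => ?_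
  rw [mul_assoc, ← exp_add, ← mul_add]
  exact h _ (by linarith)

lemma comp_max_zero (hf : ExpOrder f) : ExpOrder (fun x => f (max x 0)) := by
  obtain ⟨c, hc, C, hC, h⟩ := hf
  exact ⟨c, hc, C, hC, fun x hx => by simpa only [max_eq_left hx] using h x hx⟩

lemma eventually_integrableOn (hf : ExpOrder f) (hm : Measurable f) :
    ∀ᶠ l in atTop, IntegrableOn (fun x => exp (-l * x) * f x) (Ioi 0) := by
  obtain ⟨c, -, C, -, h⟩ := hf
  filter_upwards [eventually_gt_atTop c] with l hl
  refine ((exp_neg_integrableOn_Ioi 0 (sub_pos.2 hl)).const_mul C).mono'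
    ((measurable_exp.comp (measurable_const_mul _)).mul hm).aestronglyMeasurable ?_
  filter_upwards [ae_restrict_mem measurableSet_Ioi] with x hx
  rw [norm_mul, Real.norm_of_nonneg (exp_pos _).le, Real.norm_eq_abs]
  calc exp (-l * x) * |f x| ≤ exp (-l * x) * (C * exp (c * x)) := by gcongr; exact h x hx.le
    _ = C * exp (-(l - c) * x) := by rw [mul_left_comm, ← exp_add]; ring_nf

end ExpOrder

lemma lap_congr {f g : ℝ → ℝ} (h : EqOn f g (Ioi 0)) (l : ℝ) : lap f l = lap g l :=
  setIntegral_congr_fun measurableSet_Ioi fun x hx => by rw [h hx]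

lemma eventually_lap_sub {f g : ℝ → ℝ} (hfm : Measurable f) (hgm : Measurable g)
    (hf : ExpOrder f) (hg : ExpOrder g) :
    ∀ᶠ l in atTop, lap (fun x => f x - g x) l = lap f l - lap g l := by
  filter_upwards [hf.eventually_integrableOn hfm, hg.eventually_integrableOn hgm] with l hfl hgl
  simp only [lap, mul_sub, integral_sub hfl hgl]

lemma lap_eq_exp_mul_lap_comp_add {f : ℝ → ℝ} {s : ℝ} (hs : 0 ≤ s)
    (hf : ∀ x ∈ Ioo 0 s, f x = 0) (l : ℝ) :
    lap f l = exp (-l * s) * lap (fun u => f (s + u)) l := by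
  have hIoi : lap f l = ∫ x in Ioi s, exp (-l * x) * f x := by
    refine setIntegral_eq_of_subset_of_ae_sdiff_eq_zero measurableSet_Ioi.nullMeasurableSet
      (Ioi_subset_Ioi hs) ?_
    filter_upwards [compl_mem_ae_iff.2 (measure_singleton s)] with x hxs hx
    rw [hf x ⟨hx.1, lt_of_le_of_ne (not_lt.1 hx.2) hxs⟩, mul_zero]
  have hpre : (s + ·) ⁻¹' Ioi s = Ioi (0 : ℝ) := by ext; simp
  rw [hIoi, lap, ← integral_const_mul,
    ← (measurePreserving_add_left volume s).setIntegral_preimage_emb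
      (measurableEmbedding_addLeft s), hpre]
  refine setIntegral_congr_fun measurableSet_Ioi fun u _ => ?_
  rw [← mul_assoc, ← exp_add]
  ring_nf

lemma pow_succ_mul_lap_eq (f : ℝ → ℝ) (j : ℕ) {l : ℝ} (hl : 0 < l) :
    l ^ (j + 1) * lap f l = ∫ v in Ioi 0, exp (-v) * (l ^ j * f (v / l)) := by
  have h := integral_comp_mul_left_Ioi (fun v => exp (-v) * (l ^ j * f (v / l))) 0 hl
  simp only [mul_zero, smul_eq_mul, mul_div_cancel_left₀ _ hl.ne'] at h
  rw [← mul_inv_cancel_left₀ hl.ne' (∫ v in Ioi 0, _), ← h, lap, ← integral_const_mul,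
    ← integral_const_mul]
  refine setIntegral_congr_fun measurableSet_Ioi fun x _ => ?_
  simp only [neg_mul]
  ring

lemma integral_exp_neg_mul_pow_mul (j : ℕ) (L : ℝ) :
    ∫ v in Ioi 0, exp (-v) * (v ^ j * L) = L * j ! := by
  have h := integral_rpow_mul_exp_neg_mul_Ioi (a := j + 1) (r := 1) (by positivity) one_pos
  simp only [add_sub_cancel_right, one_mul, div_one, one_rpow, rpow_natCast,
    Gamma_nat_eq_factorial] at h
  rw [← h, ← integral_const_mul]
  refine setIntegral_congr_fun measurableSet_Ioi fun x _ => ?_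
  ring

lemma integrableOn_pow_mul_exp_neg_mul (j : ℕ) {b : ℝ} (hb : 0 < b) :
    IntegrableOn (fun v => v ^ j * exp (-b * v)) (Ioi 0) := by
  refine (integrableOn_rpow_mul_exp_neg_mul_rpow (s := j) (p := 1)
    (by linarith [j.cast_nonneg (α := ℝ)]) one_pos hb).congr_fun (fun x _ => ?_) measurableSet_Ioi
  simp only [rpow_natCast, rpow_one]

lemma abs_exp_neg_mul_pow_mul_le {f : ℝ → ℝ} {j : ℕ} {c C δ M : ℝ}
    (hfC : ∀ x ≥ 0, |f x| ≤ C * exp (c * x)) (hδ : 0 < δ)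
    (hM : ∀ u ∈ Ioo 0 δ, |f u / u ^ j| ≤ M) {l v : ℝ} (hl0 : 0 < l) (hl : 2 * c ≤ l) (hv : 0 < v) :
    |exp (-v) * (l ^ j * f (v / l))| ≤ (M + C / δ ^ j) * (v ^ j * exp (-(1 / 2) * v)) := by
  have hM0 : 0 ≤ M := (abs_nonneg _).trans (hM (δ / 2) ⟨by positivity, by linarith⟩)
  have hC : 0 ≤ C := (abs_nonneg _).trans (by simpa using hfC 0 le_rfl)
  have hCδ : 0 ≤ C / δ ^ j := by positivity
  have hvj : 0 ≤ v ^ j * exp (-(1 / 2) * v) := by positivity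
  rw [abs_mul, abs_of_pos (exp_pos _), abs_mul, abs_of_pos (pow_pos hl0 _)]
  -- for `v / l < δ` we use the behaviour of `f` near `0`, otherwise the exponential bound
  -- together with `l ≤ v / δ`
  rcases lt_or_ge (v / l) δ with hvl | hvl
  · have hsub : l ^ j * |f (v / l)| = v ^ j * |f (v / l) / (v / l) ^ j| := by
      rw [abs_div, abs_of_pos (pow_pos (div_pos hv hl0) _), div_pow]
      field_simp
    rw [hsub]
    calc exp (-v) * (v ^ j * |f (v / l) / (v / l) ^ j|)
        ≤ exp (-(1 / 2) * v) * (v ^ j * M) := by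
          gcongr
          · linarith
          · exact hM _ ⟨div_pos hv hl0, hvl⟩
      _ ≤ (M + C / δ ^ j) * (v ^ j * exp (-(1 / 2) * v)) := by nlinarith
  · have hlv : l ^ j ≤ v ^ j / δ ^ j := by
      rw [← div_pow]
      rw [le_div_iff₀ hl0, mul_comm] at hvl
      exact pow_le_pow_left₀ hl0.le (by rwa [le_div_iff₀ hδ]) j
    have hexp : exp (c * (v / l)) ≤ exp ((1 / 2) * v) := by
      rw [exp_le_exp, mul_div_assoc', div_le_iff₀ hl0]
      nlinarith
    calc exp (-v) * (l ^ j * |f (v / l)|)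
        ≤ exp (-v) * (v ^ j / δ ^ j * (C * exp ((1 / 2) * v))) := by
          gcongr
          exact (hfC _ (div_pos hv hl0).le).trans (by gcongr)
      _ = C / δ ^ j * (v ^ j * exp (-(1 / 2) * v)) := by
          rw [show -(1 / 2) * v = -v + (1 / 2) * v by ring, exp_add]
          ring
      _ ≤ (M + C / δ ^ j) * (v ^ j * exp (-(1 / 2) * v)) := by nlinarith

/-- Watson's lemma. -/
lemma tendsto_pow_mul_lap {f : ℝ → ℝ} (hm : Measurable f) (hf : ExpOrder f) {j : ℕ} {L : ℝ}
    (hL : Tendsto (fun u => f u / u ^ j) (𝓝[>] 0) (𝓝 L)) :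
    Tendsto (fun l => l ^ (j + 1) * lap f l) atTop (𝓝 (L * j !)) := by
  obtain ⟨c, -, C, -, hfC⟩ := hf
  obtain ⟨δ, hδ, hM⟩ : ∃ δ > 0, ∀ u ∈ Ioo 0 δ, |f u / u ^ j| ≤ |L| + 1 := by
    obtain ⟨δ, hδ, h⟩ := (nhdsGT_basis (0 : ℝ)).eventually_iff.1
      (hL.abs.eventually (gt_mem_nhds (lt_add_one |L|)))
    exact ⟨δ, hδ, fun u hu => (h hu).le⟩
  rw [← integral_exp_neg_mul_pow_mul]
  refine (tendsto_integral_filter_of_dominated_convergence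
    (F := fun l v => exp (-v) * (l ^ j * f (v / l))) _ ?_ ?_
    ((integrableOn_pow_mul_exp_neg_mul j (b := 1 / 2) (by norm_num)).const_mul
      (|L| + 1 + C / δ ^ j)) ?_).congr' ?_
  · exact .of_forall fun l => ((measurable_exp.comp measurable_neg).mul (measurable_const.mul
      (hm.comp (measurable_id.div_const l)))).aestronglyMeasurable
  · filter_upwards [eventually_gt_atTop 0, eventually_ge_atTop (2 * c)] with l hl0 hl
    filter_upwards [ae_restrict_mem measurableSet_Ioi] with v hv
    exact abs_exp_neg_mul_pow_mul_le hfC hδ hM hl0 hl hv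
  · filter_upwards [ae_restrict_mem measurableSet_Ioi] with v (hv : 0 < v)
    have hvl : Tendsto (fun l => v / l) atTop (𝓝[>] 0) :=
      tendsto_nhdsWithin_iff.2 ⟨tendsto_const_nhds.div_atTop tendsto_id,
        (eventually_gt_atTop 0).mono fun l hl => div_pos hv hl⟩
    refine (tendsto_const_nhds.mul (tendsto_const_nhds.mul (hL.comp hvl))).congr' ?_
    filter_upwards [eventually_gt_atTop 0] with l hl
    simp only [Function.comp, div_pow]
    field_simp
  · filter_upwards [eventually_gt_atTop 0] with l hl
    exact (pow_succ_mul_lap_eq f j hl).symm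

lemma tendsto_exp_mul_pow_mul_lap {f : ℝ → ℝ} (hm : Measurable f) (hf : ExpOrder f) {s : ℝ}
    (hs : 0 ≤ s) (hvan : ∀ x ∈ Ioo 0 s, f x = 0) {j : ℕ} {L : ℝ}
    (hL : Tendsto (fun u => f (s + u) / u ^ j) (𝓝[>] 0) (𝓝 L)) :
    Tendsto (fun l => exp (l * s) * l ^ (j + 1) * lap f l) atTop (𝓝 (L * j !)) := by
  refine (tendsto_pow_mul_lap (hm.comp (measurable_const_add s)) (hf.comp_add hs) hL).congr
    fun l => ?_
  have hexp : exp (l * s) * exp (-l * s) = 1 := by rw [← exp_add]; simp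
  rw [lap_eq_exp_mul_lap_comp_add hs hvan, Function.comp_def]
  linear_combination (-(l ^ (j + 1) * lap (fun u => f (s + u)) l)) * hexp

lemma tendsto_mul_lap {f : ℝ → ℝ} (hm : Measurable f) (hf : ExpOrder f) {L : ℝ}
    (hL : Tendsto f (𝓝[>] 0) (𝓝 L)) : Tendsto (fun l => l * lap f l) atTop (𝓝 L) := by
  simpa using tendsto_pow_mul_lap hm hf (j := 0) (by simpa using hL)

lemma RightAnalytic.tendsto_mul_lap_pow {p : ℝ → ℝ} (hpa : RightAnalytic p) (hm : Measurable p)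
    (hpe : ExpOrder p) (k : ℕ) :
    Tendsto (fun l => l * lap (fun x => p x ^ k) l) atTop (𝓝 (p 0 ^ k)) :=
  tendsto_mul_lap (hm.pow_const k) (hpe.pow k)
    (by simpa using (hpa.tendsto_add_nhdsGT le_rfl).pow k)

lemma tendsto_exp_mul_pow_mul_lap_pow_sub {p q : ℝ → ℝ} (hpm : Measurable p)
    (hqm : Measurable q) (hpe : ExpOrder p) (hqe : ExpOrder q) {s : ℝ} (hs : 0 ≤ s)
    (hvan : ∀ x ∈ Ioo 0 s, p x = q x) {j : ℕ} {d A B : ℝ}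
    (hd : Tendsto (fun u => (p (s + u) - q (s + u)) / u ^ j) (𝓝[>] 0) (𝓝 d))
    (hA : Tendsto (fun u => p (s + u)) (𝓝[>] 0) (𝓝 A))
    (hB : Tendsto (fun u => q (s + u)) (𝓝[>] 0) (𝓝 B)) (k : ℕ) :
    Tendsto (fun l => exp (l * s) * l ^ (j + 1) *
        (lap (fun x => p x ^ k) l - lap (fun x => q x ^ k) l)) atTop
      (𝓝 (d * (∑ i ∈ Finset.range k, A ^ i * B ^ (k - 1 - i)) * j !)) := by
  have hlim : Tendsto (fun u => (p (s + u) ^ k - q (s + u) ^ k) / u ^ j) (𝓝[>] 0)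
      (𝓝 (d * ∑ i ∈ Finset.range k, A ^ i * B ^ (k - 1 - i))) := by
    refine (hd.mul (tendsto_finsetSum _ fun i _ => (hA.pow i).mul (hB.pow _))).congr fun u => ?_
    rw [← geom_sum₂_mul]
    ring
  refine (tendsto_exp_mul_pow_mul_lap (f := fun x => p x ^ k - q x ^ k)
    ((hpm.pow_const k).sub (hqm.pow_const k)) ((hpe.pow k).sub (hqe.pow k)) hs
    (fun x hx => by simp [hvan x hx]) hlim).congr' ?_
  filter_upwards [eventually_lap_sub (hpm.pow_const k) (hqm.pow_const k) (hpe.pow k) (hqe.pow k)]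
    with l hl
  rw [hl]

/-- The positive critical point of `x ↦ x ^ n - x ^ m`. -/
noncomputable def criticalPoint (m n : ℕ) : ℝ := ((m : ℝ) / n) ^ ((1 : ℝ) / ((n : ℝ) - m))

section CriticalPoint

variable {m n : ℕ}

lemma criticalPoint_pos (hm : 0 < m) (hmn : m < n) : 0 < criticalPoint m n := by
  have : (0 : ℝ) < n := by exact_mod_cast hm.trans hmn
  exact rpow_pos_of_pos (by positivity) _

lemma criticalPoint_lt_one (hmn : m < n) : criticalPoint m n < 1 := by
  have hmn' : (m : ℝ) < n := by exact_mod_cast hmn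
  exact rpow_lt_one (by positivity) ((div_lt_one (by linarith [m.cast_nonneg (α := ℝ)])).2 hmn')
    (one_div_pos.2 (sub_pos.2 hmn'))

lemma mul_criticalPoint_pow (hmn : m < n) : (n : ℝ) * criticalPoint m n ^ (n - m) = m := by
  have hmn' : (m : ℝ) < n := by exact_mod_cast hmn
  have hn : (0 : ℝ) < n := by linarith [m.cast_nonneg (α := ℝ)]
  rw [criticalPoint, ← rpow_natCast, ← rpow_mul (by positivity), Nat.cast_sub hmn.le, one_div,
    inv_mul_cancel₀ (sub_pos.2 hmn').ne', rpow_one, mul_div_cancel₀ _ hn.ne']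

lemma mul_pow_sub_one_lt (hm : 0 < m) (hmn : m < n) {x : ℝ} (hx : criticalPoint m n < x) :
    m * x ^ (m - 1) < n * x ^ (n - 1) := by
  have hx0 : 0 < x := (criticalPoint_pos hm hmn).trans hx
  have hn : (0 : ℝ) < n := by exact_mod_cast hm.trans hmn
  have h : (m : ℝ) < n * x ^ (n - m) := by
    rw [← mul_criticalPoint_pow hmn]
    gcongr
    · exact (criticalPoint_pos hm hmn).le
    · omega
  calc (m : ℝ) * x ^ (m - 1) < n * x ^ (n - m) * x ^ (m - 1) := by gcongr
    _ = n * x ^ (n - 1) := by rw [mul_assoc, ← pow_add]; congr 2; omega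

lemma strictMonoOn_pow_sub_pow (hm : 0 < m) (hmn : m < n) :
    StrictMonoOn (fun x : ℝ => x ^ n - x ^ m) (Ici (criticalPoint m n)) := by
  refine strictMonoOn_of_deriv_pos (convex_Ici _) (by fun_prop) fun x hx => ?_
  rw [interior_Ici] at hx
  rw [deriv_fun_sub (differentiable_pow n).differentiableAt (differentiable_pow m).differentiableAt,
    deriv_pow_field, deriv_pow_field]
  linarith [mul_pow_sub_one_lt hm hmn hx]

lemma geom_sum₂_lt_geom_sum₂ (hm : 0 < m) (hmn : m < n) {A B : ℝ}
    (hA : criticalPoint m n < A) (hB : criticalPoint m n ≤ B) :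
    ∑ i ∈ Finset.range m, A ^ i * B ^ (m - 1 - i) <
      ∑ i ∈ Finset.range n, A ^ i * B ^ (n - 1 - i) := by
  rcases eq_or_ne A B with rfl | hAB
  · simpa only [geom_sum₂_self] using mul_pow_sub_one_lt hm hmn hA
  have key : ((∑ i ∈ Finset.range n, A ^ i * B ^ (n - 1 - i)) -
      ∑ i ∈ Finset.range m, A ^ i * B ^ (m - 1 - i)) * (A - B) =
      (A ^ n - A ^ m) - (B ^ n - B ^ m) := by
    rw [sub_mul, geom_sum₂_mul, geom_sum₂_mul]
    ring
  have hg := strictMonoOn_pow_sub_pow hm hmn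
  rcases hAB.lt_or_gt with h | h
  · have := hg (le_of_lt hA) hB h
    nlinarith
  · have := hg hB (le_of_lt hA) h
    nlinarith

end CriticalPoint

section LaplaceRatio

variable {p q : ℝ → ℝ} {n m : ℕ}

lemma eventually_lap_mul_eq_of_div_eq (hpm : Measurable p) (hqm : Measurable q)
    (hpa : RightAnalytic p) (hqa : RightAnalytic q) (hpe : ExpOrder p) (hqe : ExpOrder q)
    (hp0 : p 0 ≠ 0) (hq0 : q 0 ≠ 0)
    (hratio : ∀ᶠ l in atTop, lap (fun x => p x ^ n) l / lap (fun x => p x ^ m) l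
        = lap (fun x => q x ^ n) l / lap (fun x => q x ^ m) l) :
    ∀ᶠ l in atTop, lap (fun x => p x ^ n) l * lap (fun x => q x ^ m) l
      = lap (fun x => q x ^ n) l * lap (fun x => p x ^ m) l := by
  filter_upwards [hratio, (hpa.tendsto_mul_lap_pow hpm hpe m).eventually_ne (pow_ne_zero m hp0),
    (hqa.tendsto_mul_lap_pow hqm hqe m).eventually_ne (pow_ne_zero m hq0)] with l hl hpl hql
  rwa [div_eq_div_iff (right_ne_zero_of_mul hpl) (right_ne_zero_of_mul hql)] at hl

lemma eq_one_of_lap_mul_eq (hpm : Measurable p) (hqm : Measurable q)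
    (hpa : RightAnalytic p) (hqa : RightAnalytic q) (hpe : ExpOrder p) (hqe : ExpOrder q)
    (hp0 : p 0 = 1) (hq0 : 0 < q 0) (hmn : m < n)
    (hcross : ∀ᶠ l in atTop, lap (fun x => p x ^ n) l * lap (fun x => q x ^ m) l
      = lap (fun x => q x ^ n) l * lap (fun x => p x ^ m) l) :
    q 0 = 1 := by
  have hIp := hpa.tendsto_mul_lap_pow hpm hpe
  have hIq := hqa.tendsto_mul_lap_pow hqm hqe
  simp only [hp0, one_pow] at hIp
  have h := tendsto_nhds_unique (((hIp n).mul (hIq m)).congr'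
    (hcross.mono fun l hl => by linear_combination l ^ 2 * hl)) ((hIq n).mul (hIp m))
  by_contra h1
  exact hmn.ne ((pow_right_inj₀ hq0 h1).1 (by linarith))

theorem eq_of_lap_div_eq (hpm : Measurable p) (hqm : Measurable q)
    (hpa : RightAnalytic p) (hqa : RightAnalytic q) (hpe : ExpOrder p) (hqe : ExpOrder q)
    (hp0 : p 0 = 1) (hm : 0 < m) (hmn : m < n)
    (hpx : ∀ t > 0, criticalPoint m n < p t) (hqx : ∀ t > 0, criticalPoint m n ≤ q t)
    (hratio : ∀ᶠ l in atTop, lap (fun x => p x ^ n) l / lap (fun x => p x ^ m) l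
        = lap (fun x => q x ^ n) l / lap (fun x => q x ^ m) l) :
    ∀ x ≥ 0, p x = q x := by
  by_contra! hne
  obtain ⟨s, hs, hvan, j, d, hd, hlim⟩ :=
    (hpa.sub hqa).exists_tendsto_div_pow_of_ne_zero (by simpa only [sub_ne_zero] using hne)
  have hq0 : criticalPoint m n ≤ q 0 := by
    refine ge_of_tendsto (hqa.tendsto_add_nhdsGT le_rfl) ?_
    filter_upwards [self_mem_nhdsWithin] with u (hu : 0 < u) using hqx _ (by linarith)
  have hq0_pos : 0 < q 0 := (criticalPoint_pos hm hmn).trans_le hq0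
  have hcross := eventually_lap_mul_eq_of_div_eq hpm hqm hpa hqa hpe hqe (by simp [hp0])
    hq0_pos.ne' hratio
  have hq1 := eq_one_of_lap_mul_eq hpm hqm hpa hqa hpe hqe hp0 hq0_pos hmn hcross
  have hA : criticalPoint m n < p s := by
    rcases hs.eq_or_lt with rfl | hs
    exacts [hp0 ▸ criticalPoint_lt_one hmn, hpx s hs]
  have hB : criticalPoint m n ≤ q s := by
    rcases hs.eq_or_lt with rfl | hs
    exacts [hq0, hqx s hs]
  have hD := tendsto_exp_mul_pow_mul_lap_pow_sub hpm hqm hpe hqe hs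
    (fun x hx => sub_eq_zero.1 (hvan x (Ioo_subset_Ico_self hx))) hlim
    (hpa.tendsto_add_nhdsGT hs) (hqa.tendsto_add_nhdsGT hs)
  have hIq := hqa.tendsto_mul_lap_pow hqm hqe
  have h := tendsto_nhds_unique (((hD n).mul (hIq m)).congr'
      (hcross.mono fun l hl => by linear_combination exp (l * s) * l ^ (j + 1) * l * hl))
    ((hD m).mul (hIq n))
  simp only [hq1, one_pow, mul_one] at h
  exact (geom_sum₂_lt_geom_sum₂ hm hmn hA hB).ne'
    (mul_left_cancel₀ hd (mul_right_cancel₀ (Nat.cast_ne_zero.2 j.factorial_ne_zero) h))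

end LaplaceRatio

theorem stmt10_general (p q : ℝ → ℝ) (hpa : RightAnalytic p) (hqa : RightAnalytic q)
    (hpe : ExpOrder p) (hqe : ExpOrder q) (hp0 : p 0 = 1)
    (n m : ℕ) (hm : 1 ≤ m) (hmn : m < n)
    (hpx : ∀ t > (0:ℝ), p t > ((m : ℝ) / n) ^ ((1 : ℝ) / ((n : ℝ) - m)))
    (hqx : ∀ t > (0:ℝ), q t ≥ ((m : ℝ) / n) ^ ((1 : ℝ) / ((n : ℝ) - m)))
    (hratio : ∃ Λ : ℝ, ∀ l ≥ Λ,
        lap (fun x => p x ^ n) l / lap (fun x => p x ^ m) l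
          = lap (fun x => q x ^ n) l / lap (fun x => q x ^ m) l) :
    ∀ x ≥ (0:ℝ), p x = q x := by
  -- `lap` only sees `(0, ∞)`, so we may replace `p` and `q` by measurable functions
  have hlap (r : ℝ → ℝ) (k : ℕ) : lap (fun x => r (max x 0) ^ k) = lap (fun x => r x ^ k) :=
    funext <| lap_congr fun x (hx : 0 < x) => by simp only [max_eq_left hx.le]
  have key := eq_of_lap_div_eq hpa.measurable_comp_max_zero hqa.measurable_comp_max_zero
    hpa.comp_max_zero hqa.comp_max_zero hpe.comp_max_zero hqe.comp_max_zero
    (by simpa using hp0) hm hmn (fun t ht => by rw [max_eq_left ht.le]; exact hpx t ht)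
    (fun t ht => by rw [max_eq_left ht.le]; exact hqx t ht)
    (by simpa only [hlap] using eventually_atTop.2 hratio)
  intro x hx
  simpa [max_eq_left hx] using key x hx

theorem stmt10 (p q : ℝ → ℝ) (hpa : RightAnalytic p) (hqa : RightAnalytic q)
    (hpe : ExpOrder p) (hqe : ExpOrder q) (hp0 : p 0 = 1)
    (n m : ℕ) (hm : 1 ≤ m) (hmn : m < n) (hcop : Nat.Coprime n m)
    (hpx : ∀ t > (0:ℝ), p t > ((m : ℝ) / n) ^ ((1 : ℝ) / ((n : ℝ) - m)))
    (hqx : ∀ t > (0:ℝ), q t ≥ ((m : ℝ) / n) ^ ((1 : ℝ) / ((n : ℝ) - m)))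
    (hinf : sInf {x : ℝ | 0 < x ∧ p x ≠ 0} = 0)
    (hratio : ∃ Λ : ℝ, ∀ l ≥ Λ,
        lap (fun x => p x ^ n) l / lap (fun x => p x ^ m) l
          = lap (fun x => q x ^ n) l / lap (fun x => q x ^ m) l) :
    ∀ x ≥ (0:ℝ), p x = q x :=
  stmt10_general p q hpa hqa hpe hqe hp0 n m hm hmn hpx hqx hratio
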